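/- (Corollary 5) Let Γ be a finite simple graph on vertices p_1, …, p_n and let Σ be an r-regular finite simple graph disjoint from Γ. Let Σ_{c_1}, …, Σ_{c_n} be induced subgraphs of Σ whose vertex sets cover V(Σ) and such that every vertex of Σ lies in exactly k of the sets V(Σ_{c_1}), …, V(Σ_{c_n}). Let Γ^Σ be the graph consisting of Γ, Σ, and additional edges joining p_i to every vertex of Σ_{c_i} for each i = 1, …, n (so every vertex of Σ has degree r + k in Γ^Σ). Assume every vertex of Γ^Σ has positive degree. Then any nonzero function f on V(Σ) satisfying (1/(r+k))·∑_{j ∈ Σ, j ∼ i} f(j) = (1−λ)·f(i) for all i ∈ Σ and some real λ, together with ∑_{j ∈ Σ_{c_l}} f(j) = 0 for every l = 1, …, n, extends by zero on V(Γ) to an eigenfunction of the normalized Laplacian of Γ^Σ for the eigenvalue λ. -/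

import Mathlib

open Finset

variable {V W : Type*}

/-- `f` is an eigenfunction of the normalized graph Laplacian of `G` for the eigenvalue `μ`:
`f` is nonzero and `∑_{j ∼ i} f j = (1 - μ) · deg i · f i` for every vertex `i`. -/
def SimpleGraph.IsLapEigenfunction [Fintype V] (G : SimpleGraph V) [DecidableRel G.Adj]
    (μ : ℝ) (f : V → ℝ) : Prop :=
  f ≠ 0 ∧ ∀ i, ∑ j ∈ G.neighborFinset i, f j = (1 - μ) * (G.degree i : ℝ) * f i

/-- `μ` is an eigenvalue of the normalized graph Laplacian of `G`. -/
def SimpleGraph.IsLapEigenvalue [Fintype V] (G : SimpleGraph V) [DecidableRel G.Adj]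
    (μ : ℝ) : Prop :=
  ∃ f : V → ℝ, G.IsLapEigenfunction μ f

/-- Coupling: the disjoint union of `G` and `H` together with additional edges joining,
for each `l : Fin k`, the vertex `p l` of `G` to every vertex of `H` lying in `c l`. -/
def SimpleGraph.coupleMulti [DecidableEq V] {k : ℕ} (G : SimpleGraph V) (H : SimpleGraph W)
    (p : Fin k → V) (c : Fin k → Finset W) : SimpleGraph (V ⊕ W) where
  Adj x y :=
    match x, y with
    | Sum.inl a, Sum.inl b => G.Adj a b
    | Sum.inl a, Sum.inr b => ∃ l, a = p l ∧ b ∈ c l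
    | Sum.inr a, Sum.inl b => ∃ l, b = p l ∧ a ∈ c l
    | Sum.inr a, Sum.inr b => H.Adj a b
  symm := by
    constructor
    rintro (a | a) (b | b) h
    · exact G.adj_symm h
    · exact h
    · exact h
    · exact H.adj_symm h
  loopless := by
    constructor
    rintro (a | a) h
    · exact G.irrefl h
    · exact H.irrefl h

instance [DecidableEq V] [DecidableEq W] {k : ℕ} (G : SimpleGraph V) (H : SimpleGraph W)
    [DecidableRel G.Adj] [DecidableRel H.Adj] (p : Fin k → V) (c : Fin k → Finset W) :
    DecidableRel (G.coupleMulti H p c).Adj := fun x y =>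
  match x, y with
  | Sum.inl a, Sum.inl b => inferInstanceAs (Decidable (G.Adj a b))
  | Sum.inl a, Sum.inr b => inferInstanceAs (Decidable (∃ l, a = p l ∧ b ∈ c l))
  | Sum.inr a, Sum.inl b => inferInstanceAs (Decidable (∃ l, b = p l ∧ a ∈ c l))
  | Sum.inr a, Sum.inr b => inferInstanceAs (Decidable (H.Adj a b))

/-- **Corollary 5.** Let `Γ` have vertices `p_1, …, p_n`, let `Σ` be an
`r`-regular graph disjoint from `Γ`, and let `Σ_{c_1}, …, Σ_{c_n}` be induced subgraphs of
`Σ` whose vertex sets cover `V(Σ)`, every vertex of `Σ` lying in exactly `k` of them.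
Join `p_i` to every vertex of `Σ_{c_i}`; then every vertex of `Σ` has degree `r + k` in
the coupled graph, and any nonzero `f` on `V(Σ)` with
`(1/(r+k))·∑_{j ∼ i} f j = (1-λ)·f i` on `Σ` and `∑_{j ∈ c_l} f j = 0` for all `l`
extends by zero to an eigenfunction of the normalized Laplacian of the coupled graph for
the eigenvalue `λ`. -/
theorem coupleMulti_regular_cover_isLapEigenfunction
    {W : Type*} [Fintype W] [DecidableEq W]
    (n : ℕ) (G : SimpleGraph (Fin n)) [DecidableRel G.Adj]
    (H : SimpleGraph W) [DecidableRel H.Adj]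
    (r : ℕ) (hreg : ∀ w, H.degree w = r)
    (c : Fin n → Finset W)
    (hcover : ∀ x : W, ∃ i, x ∈ c i)
    (k : ℕ) (hk : ∀ x : W, (Finset.univ.filter fun i => x ∈ c i).card = k)
    (hdeg : ∀ x, 0 < (G.coupleMulti H (fun i => i) c).degree x)
    (f : W → ℝ) (hne : f ≠ 0) (lam : ℝ)
    (heq : ∀ i : W, ∑ j ∈ H.neighborFinset i, f j = (1 - lam) * ((r : ℝ) + (k : ℝ)) * f i)
    (hc : ∀ l, ∑ j ∈ c l, f j = 0) :
    (∀ w : W, (G.coupleMulti H (fun i => i) c).degree (Sum.inr w) = r + k)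
      ∧ (G.coupleMulti H (fun i => i) c).IsLapEigenfunction lam (Sum.elim 0 f) := by

  classical
  set C := G.coupleMulti H (fun i => i) c with hC
  have hadj1 : ∀ (a : Fin n) (w : W), C.Adj (Sum.inr w) (Sum.inl a) ↔ w ∈ c a := by
    intro a w
    constructor
    · rintro ⟨l, rfl, h⟩; exact h
    · intro h; exact ⟨a, rfl, h⟩
  have hadj4 : ∀ (a : Fin n) (w : W), C.Adj (Sum.inl a) (Sum.inr w) ↔ w ∈ c a := by
    intro a w
    constructor
    · rintro ⟨l, rfl, h⟩; exact h
    · intro h; exact ⟨a, rfl, h⟩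
  have hsum : ∀ (x : Fin n ⊕ W) (g : Fin n ⊕ W → ℝ),
      ∑ j ∈ C.neighborFinset x, g j =
        (∑ a : Fin n, if C.Adj x (Sum.inl a) then g (Sum.inl a) else 0)
        + ∑ b : W, if C.Adj x (Sum.inr b) then g (Sum.inr b) else 0 := by
    intro x g
    rw [SimpleGraph.neighborFinset_eq_filter, Finset.sum_filter, Fintype.sum_sum_type]
  have hdegw : ∀ w : W, C.degree (Sum.inr w) = r + k := by
    intro w
    rw [← SimpleGraph.card_neighborFinset_eq_degree,
      SimpleGraph.neighborFinset_eq_filter, Finset.card_filter, Fintype.sum_sum_type]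
    have h1 : ∑ a : Fin n, (if C.Adj (Sum.inr w) (Sum.inl a) then 1 else 0) = k := by
      simp only [hadj1]
      rw [← Finset.card_filter]
      · exact hk w
    have h2 : ∑ b : W, (if C.Adj (Sum.inr w) (Sum.inr b) then 1 else 0) = r := by
      have : ∀ b : W, C.Adj (Sum.inr w) (Sum.inr b) ↔ H.Adj w b := fun b => Iff.rfl
      simp only [this]
      rw [← Finset.card_filter, ← SimpleGraph.neighborFinset_eq_filter,
        SimpleGraph.card_neighborFinset_eq_degree, hreg]
    omega
  refine ⟨hdegw, ?_, ?_⟩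
  · intro h0
    apply hne
    funext w
    have := congrFun h0 (Sum.inr w)
    simpa using this
  · rintro (i | w)
    · rw [hsum]
      have h1 : ∑ a : Fin n, (if C.Adj (Sum.inl i) (Sum.inl a)
          then (Sum.elim 0 f : Fin n ⊕ W → ℝ) (Sum.inl a) else 0) = 0 := by
        simp
      have h2 : ∑ b : W, (if C.Adj (Sum.inl i) (Sum.inr b)
          then (Sum.elim 0 f : Fin n ⊕ W → ℝ) (Sum.inr b) else 0) = 0 := by
        simp only [hadj4, Sum.elim_inr]
        rw [Finset.sum_ite_mem, Finset.univ_inter] at *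
        · exact hc i
      rw [h1, h2]
      simp
    · rw [hsum]
      have h1 : ∑ a : Fin n, (if C.Adj (Sum.inr w) (Sum.inl a)
          then (Sum.elim 0 f : Fin n ⊕ W → ℝ) (Sum.inl a) else 0) = 0 := by
        simp
      have h2 : ∑ b : W, (if C.Adj (Sum.inr w) (Sum.inr b)
          then (Sum.elim 0 f : Fin n ⊕ W → ℝ) (Sum.inr b) else 0)
          = ∑ j ∈ H.neighborFinset w, f j := by
        have : ∀ b : W, C.Adj (Sum.inr w) (Sum.inr b) ↔ H.Adj w b := fun b => Iff.rfl
        simp only [this, Sum.elim_inr]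
        rw [SimpleGraph.neighborFinset_eq_filter, Finset.sum_filter]
      rw [h1, h2, heq w, hdegw w]
      simp only [Sum.elim_inr]
      push_cast
      ring
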